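/- Let i ∈ {0,1} and j ∈ {1,2}. The mapping N_i^j from λ-term-graphs over Σλ^{i,j} to λ-ap-ho-term-graphs over Σλ^i, defined by: deleting all scope-delimiter vertices (label S), restricting the label function and the (unique) correct abstraction-prefix function P to the remaining vertices V' = V(λ) ∪ V(@) ∪ V(0), keeping the root, and declaring w₀ ↣'_k w₁ for w₀, w₁ ∈ V' iff in the original graph w₀ ↣_k · (↣_0 restricted to S-vertices)* w₁ (i.e. w₁ is reached from the k-th successor of w₀ by passing through finitely many S-vertices along their 0-indexed edges), is well defined: its image is always a λ-ap-ho-term-graph over Σλ^i. -/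

import Mathlib

/-! Common framework: term graphs over a signature, homomorphisms, bisimulations,
    access paths, λ-ho-term-graphs, λ-ap-ho-term-graphs, λ-term-graphs with
    scope delimiters, and the translation constructions. -/

inductive Lab3 : Type
  | app | lam | var
  deriving DecidableEq

/-- Arity function of the signature Σλ^i = {@, λ, 0} with ar(@)=2, ar(λ)=1, ar(0)=i. -/
def ar3 (i : ℕ) : Lab3 → ℕ
  | .app => 2
  | .lam => 1
  | .var => i

inductive Lab4 : Type
  | app | lam | var | del
  deriving DecidableEq

/-- Arity function of Σλ^{i,j} = {@, λ, 0, S} with ar(@)=2, ar(λ)=1, ar(0)=i, ar(S)=j. -/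
def ar4 (i j : ℕ) : Lab4 → ℕ
  | .app => 2
  | .lam => 1
  | .var => i
  | .del => j

def lab3to4 : Lab3 → Lab4
  | .app => .app
  | .lam => .lam
  | .var => .var

def lab4to3 : Lab4 → Lab3
  | .app => .app
  | .lam => .lam
  | .var => .var
  | .del => .var

/-- A term graph over a signature: vertex labelling, argument (successor) lists of
    length matching the arity of the label, a root, and every vertex reachable
    from the root. -/
structure TermGraph (L : Type) (ar : L → ℕ) (V : Type) where
  lab : V → L
  args : V → List V
  root : V
  args_len : ∀ v, (args v).length = ar (lab v)
  reach : ∀ v, Relation.ReflTransGen (fun a b => b ∈ args a) root v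

namespace TermGraph

variable {L V : Type} {ar : L → ℕ}

/-- `G.Succ k w w'` : `w'` is the `k`-th successor of `w` (the edge w ↣_k w'). -/
def Succ (G : TermGraph L ar V) (k : ℕ) (w w' : V) : Prop :=
  (G.args w)[k]? = some w'

/-- `G.Edge w w'` : `w'` is some successor of `w` (the relation ↣). -/
def Edge (G : TermGraph L ar V) (w w' : V) : Prop :=
  w' ∈ G.args w

/-- Reachability ↠ along edges. -/
def Reaches (G : TermGraph L ar V) (w w' : V) : Prop :=
  Relation.ReflTransGen G.Edge w w'

end TermGraph

/-- Homomorphism (functional bisimulation) of term graphs. -/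
def IsHom {L V₁ V₂ : Type} {ar : L → ℕ} (h : V₁ → V₂)
    (G₁ : TermGraph L ar V₁) (G₂ : TermGraph L ar V₂) : Prop :=
  (∀ v, G₂.lab (h v) = G₁.lab v) ∧
  (∀ v, G₂.args (h v) = (G₁.args v).map h) ∧
  h G₁.root = G₂.root

/-- Bisimulation between term graphs: a term graph on a set of pairs, rooted at the
    pair of roots, whose two projections are homomorphisms. -/
def Bisim {L V₁ V₂ : Type} {ar : L → ℕ}
    (G₁ : TermGraph L ar V₁) (G₂ : TermGraph L ar V₂) : Prop :=
  ∃ (S : Set (V₁ × V₂)) (R : TermGraph L ar S),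
    (R.root : V₁ × V₂) = (G₁.root, G₂.root) ∧
    IsHom (fun x : S => x.val.1) R G₁ ∧
    IsHom (fun x : S => x.val.2) R G₂

/-- An access path of a vertex `w`: a path from the root to `w` (with edge indices)
    that visits no vertex twice. -/
structure AccessPath {L V : Type} {ar : L → ℕ} (G : TermGraph L ar V) (w : V) where
  n : ℕ
  vs : Fin (n + 1) → V
  ks : Fin n → ℕ
  start : vs 0 = G.root
  finish : vs (Fin.last n) = w
  step : ∀ m : Fin n, G.Succ (ks m) (vs m.castSucc) (vs m.succ)
  inj : Function.Injective vs

/-- The conditions (root), (self), (nest), (closed), (scope)₀ and (for i = 1) (scope)₁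
    on a scope function. -/
def ScopeConds (i : ℕ) {V : Type} (G : TermGraph Lab3 (ar3 i) V)
    (Sc : V → Set V) : Prop :=
  (∀ v, G.lab v = .lam → G.root ∉ Sc v \ {v}) ∧
  (∀ v, G.lab v = .lam → v ∈ Sc v) ∧
  (∀ v₀ v₁, G.lab v₀ = .lam → G.lab v₁ = .lam → v₁ ∈ Sc v₀ \ {v₀} →
      Sc v₁ ⊆ Sc v₀ \ {v₀}) ∧
  (∀ v w wk k, G.lab v = .lam → G.Succ k w wk → wk ∈ Sc v \ {v} → w ∈ Sc v) ∧
  (∀ w, G.lab w = .var → ∃ v, G.lab v = .lam ∧ w ∈ Sc v \ {v}) ∧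
  (i = 1 → ∀ w w₀, G.lab w = .var → G.Succ 0 w w₀ →
      G.lab w₀ = .lam ∧ ∀ v, G.lab v = .lam → (w ∈ Sc v ↔ w₀ ∈ Sc v))

/-- λ-ho-term-graph over Σλ^i: a Σλ^i-term-graph endowed with a scope function. -/
structure LamHoTG (i : ℕ) (V : Type) extends TermGraph Lab3 (ar3 i) V where
  Sc : V → Set V
  conds : ScopeConds i toTermGraph Sc

/-- Correctness of an abstraction-prefix function for a Σλ^i-term-graph:
    (root), (λ), (@), (0)₀, and (for i = 1) (0)₁. -/
def CorrectAP (i : ℕ) {V : Type} (G : TermGraph Lab3 (ar3 i) V)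
    (P : V → List V) : Prop :=
  (P G.root = []) ∧
  (∀ w w₀, G.lab w = .lam → G.Succ 0 w w₀ → P w₀ <+: P w ++ [w]) ∧
  (∀ w wk k, G.lab w = .app → G.Succ k w wk → P wk <+: P w) ∧
  (∀ w, G.lab w = .var → P w ≠ []) ∧
  (i = 1 → ∀ w w₀, G.lab w = .var → G.Succ 0 w w₀ →
      G.lab w₀ = .lam ∧ P w₀ ++ [w₀] = P w)

/-- λ-ap-ho-term-graph over Σλ^i: a Σλ^i-term-graph endowed with a correct
    abstraction-prefix function. -/
structure LamApHoTG (i : ℕ) (V : Type) extends TermGraph Lab3 (ar3 i) V where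
  P : V → List V
  correct : CorrectAP i toTermGraph P

/-- `ScToP G Sc P` : the abstraction-prefix function `P` is the one obtained from the
    scope function `Sc` by the mapping A_i: for each vertex `w`, `P w` lists exactly
    the binders of `w` other than `w` itself, in order of strictly decreasing scopes. -/
def ScToP {i : ℕ} {V : Type} (G : TermGraph Lab3 (ar3 i) V)
    (Sc : V → Set V) (P : V → List V) : Prop :=
  ∀ w, (∀ v, v ∈ P w ↔ (G.lab v = .lam ∧ w ∈ Sc v ∧ v ≠ w)) ∧
    (P w).Chain' (fun a b => Sc b ⊂ Sc a)

/-- The scope function obtained from an abstraction-prefix function by the mapping B_i: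
    Sc(v) = { w | v occurs in P(w) } ∪ {v}. -/
def ScOfP {V : Type} (P : V → List V) : V → Set V :=
  fun v => {w | v ∈ P w} ∪ {v}

/-- Homomorphism of λ-ho-term-graphs (given by their underlying term graphs and
    scope functions). -/
def IsHoHom {i : ℕ} {V₁ V₂ : Type} (h : V₁ → V₂)
    (G₁ : TermGraph Lab3 (ar3 i) V₁) (Sc₁ : V₁ → Set V₁)
    (G₂ : TermGraph Lab3 (ar3 i) V₂) (Sc₂ : V₂ → Set V₂) : Prop :=
  IsHom h G₁ G₂ ∧ ∀ v, G₁.lab v = .lam → h '' Sc₁ v = Sc₂ (h v)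

/-- Homomorphism of λ-ap-ho-term-graphs (given by their underlying term graphs and
    abstraction-prefix functions). -/
def IsApHom {i : ℕ} {V₁ V₂ : Type} (h : V₁ → V₂)
    (G₁ : TermGraph Lab3 (ar3 i) V₁) (P₁ : V₁ → List V₁)
    (G₂ : TermGraph Lab3 (ar3 i) V₂) (P₂ : V₂ → List V₂) : Prop :=
  IsHom h G₁ G₂ ∧ ∀ v, (P₁ v).map h = P₂ (h v)

/-- Correctness of an abstraction-prefix function for a Σλ^{i,j}-term-graph:
    (root), (λ), (@), (0)₀, (0)₁ (for i = 1), (S)₁, and (S)₂ (for j = 2). -/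
def CorrectAP4 (i j : ℕ) {V : Type} (G : TermGraph Lab4 (ar4 i j) V)
    (P : V → List V) : Prop :=
  (P G.root = []) ∧
  (∀ w w₀, G.lab w = .lam → G.Succ 0 w w₀ → P w₀ = P w ++ [w]) ∧
  (∀ w wk k, G.lab w = .app → G.Succ k w wk → P wk = P w) ∧
  (∀ w, G.lab w = .var → P w ≠ []) ∧
  (i = 1 → ∀ w w₀, G.lab w = .var → G.Succ 0 w w₀ →
      G.lab w₀ = .lam ∧ P w₀ ++ [w₀] = P w) ∧
  (∀ w w₀, G.lab w = .del → G.Succ 0 w w₀ → ∃ v, P w₀ ++ [v] = P w) ∧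
  (j = 2 → ∀ w w₁, G.lab w = .del → G.Succ 1 w w₁ →
      G.lab w₁ = .lam ∧ P w₁ ++ [w₁] = P w)

/-- Vertex-set predicate of the construction G_i^j: original vertices (inl) together
    with scope-delimiter vertices (w, k, w', p) inserted along an edge w ↣_k w',
    one for each prefix p with P(w') < p ≤ P(w)·w (for λ-vertices w),
    resp. P(w') < p ≤ P(w) (for @-vertices w). -/
def GVP {i : ℕ} {V : Type} (G : TermGraph Lab3 (ar3 i) V) (P : V → List V) :
    V ⊕ (V × ℕ × V × List V) → Prop
  | .inl _ => True
  | .inr (w, k, w', p) =>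
      G.Succ k w w' ∧ P w' <+: p ∧ P w' ≠ p ∧
      ((G.lab w = .lam ∧ p <+: P w ++ [w]) ∨ (G.lab w = .app ∧ p <+: P w))

/-- Vertex set of the image of G_i^j. -/
def GVert {i : ℕ} {V : Type} (G : TermGraph Lab3 (ar3 i) V) (P : V → List V) : Type :=
  { x : V ⊕ (V × ℕ × V × List V) // GVP G P x }

/-- Labelling of the image of G_i^j: original labels on original vertices,
    `S` on the inserted delimiter vertices. -/
def GLab {i : ℕ} {V : Type} (G : TermGraph Lab3 (ar3 i) V) (P : V → List V)
    (x : GVert G P) : Lab4 :=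
  match x.val with
  | .inl w => lab3to4 (G.lab w)
  | .inr _ => .del

/-- The successor relation of the image of G_i^j (clauses as in the definition of
    the mapping G_i^j; for j = 2 the inserted S-vertices carry a 1-indexed back-link
    to the abstraction vertex whose extended scope they close). -/
def CSucc {i : ℕ} {V : Type} (j : ℕ) (G : TermGraph Lab3 (ar3 i) V) (P : V → List V)
    (k : ℕ) (x y : GVert G P) : Prop :=
  (∃ w wk, x.val = .inl w ∧ y.val = .inl wk ∧ G.Succ k w wk ∧
     (G.lab w = .var ∨ (G.lab w = .lam ∧ P wk = P w ++ [w]) ∨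
      (G.lab w = .app ∧ P wk = P w))) ∨
  (∃ w w₀, x.val = .inl w ∧ G.lab w = .lam ∧ G.Succ 0 w w₀ ∧ P w₀ ≠ P w ++ [w] ∧
     k = 0 ∧ y.val = .inr (w, 0, w₀, P w ++ [w])) ∨
  (∃ w wk, x.val = .inl w ∧ G.lab w = .app ∧ G.Succ k w wk ∧ P wk ≠ P w ∧
     y.val = .inr (w, k, wk, P w)) ∨
  (∃ w k' w' p v, x.val = .inr (w, k', w', p ++ [v]) ∧ k = 0 ∧ P w' ≠ p ∧
     y.val = .inr (w, k', w', p)) ∨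
  (∃ w k' w' v, x.val = .inr (w, k', w', P w' ++ [v]) ∧ k = 0 ∧ y.val = .inl w') ∨
  (j = 2 ∧ ∃ w k' w' p v, x.val = .inr (w, k', w', p ++ [v]) ∧ k = 1 ∧ y.val = .inl v)

/-- `IsGImage i j G P G'` : the Σλ^{i,j}-term-graph `G'` is the image of the
    λ-ap-ho-term-graph given by `G` and `P` under the mapping G_i^j. -/
def IsGImage (i j : ℕ) {V : Type} (G : TermGraph Lab3 (ar3 i) V) (P : V → List V)
    (G' : TermGraph Lab4 (ar4 i j) (GVert G P)) : Prop :=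
  (G'.root).val = .inl G.root ∧
  (∀ x, G'.lab x = GLab G P x) ∧
  (∀ k x y, G'.Succ k x y ↔ CSucc j G P k x y)

/-- One step along the 0-indexed edge of a scope-delimiter vertex. -/
def DelStep {i j : ℕ} {V : Type} (G : TermGraph Lab4 (ar4 i j) V) (a b : V) : Prop :=
  G.lab a = .del ∧ G.Succ 0 a b

/-- The non-delimiter vertices of a Σλ^{i,j}-term-graph. -/
def NVert {i j : ℕ} {V : Type} (G : TermGraph Lab4 (ar4 i j) V) : Type :=
  { v : V // G.lab v ≠ .del }

/-- `IsNImage i j G P G' P'` : the Σλ^i-term-graph `G'` with abstraction-prefix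
    function `P'` is the image of the λ-term-graph `G` (with correct prefix
    function `P`) under the mapping N_i^j: S-vertices are deleted, labels and the
    prefix function are restricted, the root is kept, and w₀ ↣'_k w₁ holds iff
    w₁ is reached from the k-th successor of w₀ by passing through finitely many
    S-vertices along their 0-indexed edges. -/
def IsNImage (i j : ℕ) {V : Type} (G : TermGraph Lab4 (ar4 i j) V) (P : V → List V)
    (G' : TermGraph Lab3 (ar3 i) (NVert G)) (P' : NVert G → List (NVert G)) : Prop :=
  (G'.root).val = G.root ∧
  (∀ x : NVert G, G'.lab x = lab4to3 (G.lab x.val)) ∧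
  (∀ k (a b : NVert G), G'.Succ k a b ↔
      ∃ u, G.Succ k a.val u ∧ Relation.ReflTransGen (DelStep G) u b.val) ∧
  (∀ v : NVert G, (P' v).map Subtype.val = P v.val)

/-- A λ-term-graph over Σλ^{1,2} (given by `G` with correct prefix function `P`) is
    fully back-linked if the last vertex of the abstraction prefix of any vertex `w`
    is reachable from `w`. -/
def FullyBackLinked {V : Type} (G : TermGraph Lab4 (ar4 1 2) V)
    (P : V → List V) : Prop :=
  ∀ w v p, P w = p ++ [v] → G.Reaches w v

/-- Eager-scope: whenever P(w) = p·v there is a path from `w` to `v` which ends with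
    a 0-indexed edge from a variable vertex to `v`, and all of whose intermediate
    vertices have abstraction prefixes extending P(w). -/
def EagerScope {V : Type} (G : TermGraph Lab4 (ar4 1 2) V)
    (P : V → List V) : Prop :=
  ∀ w v p, P w = p ++ [v] →
    ∃ (n : ℕ) (u : Fin (n + 1) → V),
      u 0 = w ∧
      (∀ m : Fin n, G.Edge (u m.castSucc) (u m.succ)) ∧
      G.Succ 0 (u (Fin.last n)) v ∧
      G.lab (u (Fin.last n)) = .var ∧
      ∀ m : Fin (n + 1), m ≠ 0 → P w <+: P (u m)

/-! Following the 0-indexed edge of an `S`-vertex drops the last entry of the abstraction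
prefix, so every chain of `S`-vertices ends, and since that edge is unique the non-`S` vertex
it ends in is unique: this makes the new successor relation a function. Passing through
`S`-vertices only shortens abstraction prefixes, so the equations (λ) and (@) of the original
prefix function weaken to the prefix conditions of a λ-ap-ho-term-graph. The one subtle point
is reachability of all vertices after the deletion: a vertex entered through the 1-indexed
back-link of an `S`-vertex is a λ-vertex of that vertex's abstraction prefix, so along paths
from the root one carries the invariant that every vertex of the current abstraction prefix
is reachable as well. -/

open Relation

namespace TermGraph

variable {L V : Type} {ar : L → ℕ} {G : TermGraph L ar V} {k : ℕ} {w w' : V}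

theorem Succ.lt_ar (h : G.Succ k w w') : k < ar (G.lab w) :=
  G.args_len w ▸ (List.getElem?_eq_some_iff.mp h).1

theorem exists_succ_zero (hw : 0 < ar (G.lab w)) : ∃ w', G.Succ 0 w w' :=
  ⟨_, List.getElem?_eq_getElem (G.args_len w ▸ hw)⟩

theorem exists_succ_of_mem_args (h : w' ∈ G.args w) : ∃ k, G.Succ k w w' :=
  List.mem_iff_getElem?.mp h

end TermGraph

section DelStep

variable {i j : ℕ} {V : Type} {G : TermGraph Lab4 (ar4 i j) V} {u w w' : V}

theorem delStep_rightUnique : Relator.RightUnique (DelStep G) :=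
  fun _ _ _ h h' => Option.some_injective _ (h.2.symm.trans h'.2)

theorem eq_of_delSteps_of_ne_del (h : ReflTransGen (DelStep G) u w) (hu : G.lab u ≠ .del) :
    w = u := by
  rcases h.cases_head with h | ⟨_, hstep, _⟩
  · exact h.symm
  · exact absurd hstep.1 hu

theorem eq_of_delSteps_of_delSteps (hw : ReflTransGen (DelStep G) u w)
    (hw' : ReflTransGen (DelStep G) u w') (hlw : G.lab w ≠ .del) (hlw' : G.lab w' ≠ .del) :
    w = w' := by
  rcases ReflTransGen.total_of_right_unique delStep_rightUnique hw hw' with h | h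
  · exact (eq_of_delSteps_of_ne_del h hlw).symm
  · exact eq_of_delSteps_of_ne_del h hlw'

end DelStep

namespace CorrectAP4

variable {i j : ℕ} {V : Type} {G : TermGraph Lab4 (ar4 i j) V} {P : V → List V}
  {u v w w' : V} {k : ℕ}

theorem prefix_of_delSteps (hC : CorrectAP4 i j G P) (h : ReflTransGen (DelStep G) u w) :
    P w <+: P u := by
  induction h with
  | refl => exact List.prefix_refl _
  | tail _ hstep ih =>
    obtain ⟨v, hv⟩ := hC.2.2.2.2.2.1 _ _ hstep.1 hstep.2
    exact (hv ▸ List.prefix_append _ _).trans ih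

theorem exists_delStep (hC : CorrectAP4 i j G P) (hj : 1 ≤ j) (hu : G.lab u = .del) :
    ∃ w, DelStep G u w ∧ (P w).length < (P u).length := by
  obtain ⟨w, hw⟩ := TermGraph.exists_succ_zero (G := G) (w := u) (by rwa [hu])
  obtain ⟨v, hv⟩ := hC.2.2.2.2.2.1 _ _ hu hw
  exact ⟨w, ⟨hu, hw⟩, by simp [← hv]⟩

theorem lab_root_ne_del (hC : CorrectAP4 i j G P) (hj : 1 ≤ j) : G.lab G.root ≠ .del :=
  fun h => by simpa [hC.1] using (hC.exists_delStep hj h).choose_spec.2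

theorem exists_delSteps_ne_del (hC : CorrectAP4 i j G P) (hj : 1 ≤ j) (u : V) :
    ∃ w : NVert G, ReflTransGen (DelStep G) u w.val := by
  induction hn : (P u).length using Nat.strong_induction_on generalizing u with
  | _ n ih =>
    by_cases hu : G.lab u = .del
    · obtain ⟨w, hstep, hlt⟩ := hC.exists_delStep hj hu
      obtain ⟨w', hw'⟩ := ih _ (hn ▸ hlt) w rfl
      exact ⟨w', .head hstep hw'⟩
    · exact ⟨⟨u, hu⟩, .refl⟩

theorem mem_prefix_of_succ (hC : CorrectAP4 i j G P) (hi : i ≤ 1) (hj : j ≤ 2)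
    (h : G.Succ k w w') (hv : v ∈ P w') : v ∈ P w ∨ (v = w ∧ G.lab w = .lam) := by
  have hk := h.lt_ar
  cases hw : G.lab w with
  | app => exact .inl (hC.2.2.1 w w' k hw h ▸ hv)
  | lam =>
    obtain rfl : k = 0 := by simp_all [ar4]
    simpa [hC.2.1 w w' hw h, hw] using hv
  | var =>
    obtain ⟨rfl, rfl⟩ : i = 1 ∧ k = 0 := by simp only [hw, ar4] at hk; omega
    exact .inl (by simp [← (hC.2.2.2.2.1 rfl w w' hw h).2, hv])
  | del =>
    simp only [hw, ar4] at hk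
    obtain rfl | rfl : k = 0 ∨ k = 1 := by omega
    · obtain ⟨v', hv'⟩ := hC.2.2.2.2.2.1 w w' hw h
      exact .inl (by simp [← hv', hv])
    · exact .inl (by simp [← (hC.2.2.2.2.2.2 (by omega) w w' hw h).2, hv])

theorem lab_eq_lam_of_mem_prefix (hC : CorrectAP4 i j G P) (hi : i ≤ 1) (hj : j ≤ 2)
    (hv : v ∈ P w) : G.lab v = .lam := by
  induction G.reach w with
  | refl => simp [hC.1] at hv
  | tail _ hedge ih =>
    obtain ⟨k, hk⟩ := TermGraph.exists_succ_of_mem_args hedge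
    rcases hC.mem_prefix_of_succ hi hj hk hv with hv | ⟨rfl, hlam⟩
    · exact ih hv
    · exact hlam

end CorrectAP4

section NImage

variable {i j : ℕ} {V : Type} {G : TermGraph Lab4 (ar4 i j) V}
  (hnf : ∀ u, ∃ w : NVert G, ReflTransGen (DelStep G) u w.val)

noncomputable def skipDel (u : V) : NVert G :=
  Classical.choose (hnf u)

theorem delSteps_skipDel (u : V) : ReflTransGen (DelStep G) u (skipDel hnf u).val :=
  Classical.choose_spec (hnf u)

theorem skipDel_eq_of_delSteps {u : V} {w : NVert G} (h : ReflTransGen (DelStep G) u w.val) :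
    skipDel hnf u = w :=
  Subtype.ext <| eq_of_delSteps_of_delSteps (delSteps_skipDel hnf u) h
    (skipDel hnf u).2 w.2

theorem skipDel_val (w : NVert G) : skipDel hnf w.val = w :=
  skipDel_eq_of_delSteps hnf .refl

noncomputable def nArgs (x : NVert G) : List (NVert G) :=
  (G.args x.val).map (skipDel hnf)

theorem length_nArgs (x : NVert G) : (nArgs hnf x).length = ar3 i (lab4to3 (G.lab x.val)) := by
  rw [nArgs, List.length_map, G.args_len]
  cases h : G.lab x.val
  all_goals first | rfl | exact absurd h x.2

theorem getElem?_nArgs_eq_some_iff {k : ℕ} {a b : NVert G} :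
    (nArgs hnf a)[k]? = some b ↔ ∃ u, G.Succ k a.val u ∧ ReflTransGen (DelStep G) u b.val := by
  simp only [nArgs, List.getElem?_map, Option.map_eq_some_iff]
  refine ⟨fun ⟨u, hu, hub⟩ => ⟨u, hu, hub ▸ delSteps_skipDel hnf u⟩, fun ⟨u, hu, hub⟩ => ?_⟩
  exact ⟨u, hu, skipDel_eq_of_delSteps hnf hub⟩

theorem CorrectAP4.reaches_skipDel {P : V → List V} (hC : CorrectAP4 i j G P) (hi : i ≤ 1)
    (hj : j ≤ 2) (hroot : G.lab G.root ≠ .del) (w : V) :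
    ReflTransGen (fun a b => b ∈ nArgs hnf a) ⟨G.root, hroot⟩ (skipDel hnf w) ∧
      ∀ v ∈ P w, ∃ hv : G.lab v ≠ .del,
        ReflTransGen (fun a b => b ∈ nArgs hnf a) ⟨G.root, hroot⟩ ⟨v, hv⟩ := by
  induction G.reach w with
  | refl => exact ⟨skipDel_val hnf ⟨_, hroot⟩ ▸ .refl, by simp [hC.1]⟩
  | @tail b c _ hbc ih =>
    obtain ⟨k, hk⟩ := TermGraph.exists_succ_of_mem_args hbc
    refine ⟨?_, fun v hv => ?_⟩
    · by_cases hb : G.lab b = .del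
      · have hk1 := hk.lt_ar
        simp only [hb, ar4] at hk1
        obtain rfl | rfl : k = 0 ∨ k = 1 := by omega
        · rw [← skipDel_eq_of_delSteps hnf (.head ⟨hb, hk⟩ (delSteps_skipDel hnf c))]
          exact ih.1
        · obtain ⟨hc, hPb⟩ := hC.2.2.2.2.2.2 (by omega) b c hb hk
          obtain ⟨hcd, hreach⟩ := ih.2 c (by simp [← hPb])
          rwa [skipDel_eq_of_delSteps hnf (w := ⟨c, hcd⟩) .refl]
      · have hreach := skipDel_val hnf ⟨b, hb⟩ ▸ ih.1
        exact hreach.tail (List.mem_map_of_mem hbc)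
    · rcases hC.mem_prefix_of_succ hi hj hk hv with hv | ⟨rfl, hlam⟩
      · exact ih.2 v hv
      · exact ⟨by simp [hlam], skipDel_val hnf ⟨v, by simp [hlam]⟩ ▸ ih.1⟩

end NImage

theorem CorrectAP4.exists_isNImage {i j : ℕ} {V : Type} {G : TermGraph Lab4 (ar4 i j) V}
    {P : V → List V} (hC : CorrectAP4 i j G P) (hi : i ≤ 1) (hj₁ : 1 ≤ j) (hj₂ : j ≤ 2) :
    ∃ (G' : TermGraph Lab3 (ar3 i) (NVert G)) (P' : NVert G → List (NVert G)),
      IsNImage i j G P G' P' := by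
  have hnf := hC.exists_delSteps_ne_del hj₁
  have hroot := hC.lab_root_ne_del hj₁
  have hPdel : ∀ w, ∀ v ∈ P w, G.lab v ≠ .del := fun _ _ hv => by
    simp [hC.lab_eq_lam_of_mem_prefix hi hj₂ hv]
  refine ⟨{ lab := fun x => lab4to3 (G.lab x.val)
            args := nArgs hnf
            root := ⟨G.root, hroot⟩
            args_len := length_nArgs hnf
            reach := fun x => skipDel_val hnf x ▸ (hC.reaches_skipDel hnf hi hj₂ hroot x.val).1 },
    fun v => (P v.val).attachWith _ (hPdel v.val),
    rfl, fun _ => rfl, fun _ _ _ => getElem?_nArgs_eq_some_iff hnf,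
    fun v => List.attachWith_map_subtype_val _⟩

theorem lab3to4_lab4to3 {l : Lab4} (h : l ≠ .del) : lab3to4 (lab4to3 l) = l := by
  cases l <;> first | rfl | exact absurd rfl h

theorem IsNImage.correctAP {i j : ℕ} {V : Type} {G : TermGraph Lab4 (ar4 i j) V}
    {P : V → List V} {G' : TermGraph Lab3 (ar3 i) (NVert G)} {P' : NVert G → List (NVert G)}
    (hN : IsNImage i j G P G' P') (hC : CorrectAP4 i j G P) : CorrectAP i G' P' := by
  obtain ⟨hroot, hlab, hsucc, hP⟩ := hN
  have hlab' (x : NVert G) : G.lab x.val = lab3to4 (G'.lab x) := by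
    rw [hlab, lab3to4_lab4to3 x.2]
  have hval : Function.Injective fun x : NVert G => x.val := Subtype.val_injective
  have hmap (v : NVert G) : (P' v).map (·.val) = P v.val := hP v
  have hprefix {a : NVert G} {l : List (NVert G)} (h : P a.val <+: l.map (·.val)) :
      P' a <+: l :=
    (List.prefix_map_iff_of_injective hval).mp (hmap a ▸ h)
  refine ⟨List.map_eq_nil_iff.mp ((hP _).trans (hroot ▸ hC.1)), ?_, ?_, ?_, ?_⟩
  · intro w w₀ hw hs
    obtain ⟨u, hu, hu₀⟩ := (hsucc 0 w w₀).mp hs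
    have hPu := hC.2.1 w.val u (by rw [hlab', hw]; rfl) hu
    exact hprefix (by simpa [hmap, ← hPu] using hC.prefix_of_delSteps hu₀)
  · intro w wk k hw hs
    obtain ⟨u, hu, huk⟩ := (hsucc k w wk).mp hs
    have hPu := hC.2.2.1 w.val u k (by rw [hlab', hw]; rfl) hu
    exact hprefix (by simpa [hmap, ← hPu] using hC.prefix_of_delSteps huk)
  · intro w hw hnil
    exact hC.2.2.2.1 w.val (by rw [hlab', hw]; rfl) (by rw [← hmap, hnil, List.map_nil])
  · intro hi w w₀ hw hs
    obtain ⟨u, hu, hu₀⟩ := (hsucc 0 w w₀).mp hs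
    obtain ⟨hulam, hPu⟩ := hC.2.2.2.2.1 hi w.val u (by rw [hlab', hw]; rfl) hu
    obtain rfl : w₀.val = u := eq_of_delSteps_of_ne_del hu₀ (by simp [hulam])
    refine ⟨by rw [hlab, hulam]; rfl, List.map_injective_iff.mpr hval ?_⟩
    simpa [hmap] using hPu

/-- Proposition 5.5: the mapping N_i^j, deleting the scope-delimiter vertices of a
    λ-term-graph over Σλ^{i,j} and restricting its (unique) correct abstraction-prefix
    function, is well-defined: its image is a λ-ap-ho-term-graph over Σλ^i. -/
theorem nmap_well_defined :
    ∀ i ∈ ({0, 1} : Set ℕ), ∀ j ∈ ({1, 2} : Set ℕ),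
      ∀ (V : Type) (G : TermGraph Lab4 (ar4 i j) V) (P : V → List V),
        CorrectAP4 i j G P →
        ∃ (G' : TermGraph Lab3 (ar3 i) (NVert G)) (P' : NVert G → List (NVert G)),
          IsNImage i j G P G' P' ∧ CorrectAP i G' P' := by
  intro i hi j hj V G P hC
  simp only [Set.mem_insert_iff, Set.mem_singleton_iff] at hi hj
  obtain ⟨G', P', hN⟩ := hC.exists_isNImage (by omega) (by omega) (by omega)
  exact ⟨G', P', hN, hN.correctAP hC⟩
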